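/- arXiv:1101.3031 — 2 statements merged into one kernel-verified Lean document; each statement's English description precedes it below -/
import Mathlib

section
/- Let f : ℝ² → ℝ be a C² function whose gradient decays uniformly faster than 1/r. Suppose that for unit vectors X, Y the function p ↦ k(p,X) − k(p,Y) is continuous and not identically zero on ℝ². Then it changes sign on ℝ², i.e., it attains both positive and negative values. -/
/-!
Put `V = arctan (∂_X f) • X - arctan (∂_Y f) • Y`. Since `∂_Z (arctan (∂_Z f)) = f_ZZ / (1 + f_Z²)`,
the divergence of `V` is `(k(·,X) - k(·,Y)) * √(1 + ‖∇f‖²)`. As `‖V‖ ≤ 2‖∇f‖` and `r‖∇f‖ → 0`,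
the flux of `V` through the boundary of the square `[-r, r]²` tends to `0`, hence so does the
integral of the divergence over the square. A continuous function of constant sign with this
property vanishes identically.
-/

open Real

/-- The normal curvature of the graph of `f` above `p` in the direction `X`. -/
noncomputable def normalCurv (f : ℝ × ℝ → ℝ) (p X : ℝ × ℝ) : ℝ :=
  fderiv ℝ (fun q => fderiv ℝ f q X) p X /
    ((1 + (fderiv ℝ f p X) ^ 2) *
      Real.sqrt (1 + ((fderiv ℝ f p (1, 0)) ^ 2 + (fderiv ℝ f p (0, 1)) ^ 2)))

open MeasureTheory Filter Topology Metric Set Bornology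

theorem Real.abs_arctan_le_abs (x : ℝ) : |arctan x| ≤ |x| := by
  have key : ∀ y, 0 ≤ y → arctan y ≤ y := fun y hy => by
    simpa using le_tan (arctan_nonneg.2 hy) (arctan_lt_pi_div_two y)
  rcases le_total 0 x with hx | hx
  · rw [abs_of_nonneg (arctan_nonneg.2 hx), abs_of_nonneg hx]
    exact key x hx
  · rw [abs_of_nonpos (arctan_le_zero.2 hx), abs_of_nonpos hx, ← arctan_neg]
    exact key (-x) (neg_nonneg.2 hx)

theorem exists_eq_polar (p : ℝ × ℝ) :
    ∃ θ : ℝ, p = (√(p.1 ^ 2 + p.2 ^ 2) * cos θ, √(p.1 ^ 2 + p.2 ^ 2) * sin θ) := by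
  have hnorm : ‖(⟨p.1, p.2⟩ : ℂ)‖ = √(p.1 ^ 2 + p.2 ^ 2) := by
    rw [Complex.norm_def, Complex.normSq_apply]
    ring_nf
  refine ⟨Complex.arg ⟨p.1, p.2⟩, Prod.ext ?_ ?_⟩
  · simpa [hnorm] using (Complex.norm_mul_cos_arg ⟨p.1, p.2⟩).symm
  · simpa [hnorm] using (Complex.norm_mul_sin_arg ⟨p.1, p.2⟩).symm

theorem Prod.norm_le_sqrt_sq_add_sq (p : ℝ × ℝ) : ‖p‖ ≤ √(p.1 ^ 2 + p.2 ^ 2) := by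
  rw [Prod.norm_def, Real.norm_eq_abs, Real.norm_eq_abs]
  exact max_le (Real.abs_le_sqrt (by nlinarith)) (Real.abs_le_sqrt (by nlinarith))

theorem Prod.norm_le_one_of_sq_add_sq_eq_one {Z : ℝ × ℝ} (hZ : Z.1 ^ 2 + Z.2 ^ 2 = 1) :
    ‖Z‖ ≤ 1 := by
  simpa [hZ] using Prod.norm_le_sqrt_sq_add_sq Z

theorem Prod.closedBall_zero_eq_Icc (r : ℝ) : closedBall (0 : ℝ × ℝ) r = Icc (-r, -r) (r, r) := by
  ext p
  simp only [mem_closedBall_zero_iff, Prod.norm_def, Real.norm_eq_abs, max_le_iff, abs_le,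
    mem_Icc, Prod.le_def]
  tauto

theorem abs_intervalIntegral_neg_le {φ : ℝ → ℝ} {r M : ℝ} (hr : 0 ≤ r)
    (hφ : ∀ t, |t| ≤ r → |φ t| ≤ M) : |∫ t in -r..r, φ t| ≤ 2 * r * M := by
  have := intervalIntegral.norm_integral_le_of_norm_le_const (a := -r) (b := r) (f := φ) (C := M)
    fun t ht => by
      rw [uIoc_of_le (by linarith)] at ht
      exact hφ t (abs_le.2 ⟨ht.1.le, ht.2⟩)
  rw [Real.norm_eq_abs, sub_neg_eq_add, abs_of_nonneg (by linarith : 0 ≤ r + r)] at this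
  linarith

def planarDivergence (L : ℝ × ℝ →L[ℝ] ℝ × ℝ) : ℝ :=
  (L (1, 0)).1 + (L (0, 1)).2

theorem planarDivergence_sub (L M : ℝ × ℝ →L[ℝ] ℝ × ℝ) :
    planarDivergence (L - M) = planarDivergence L - planarDivergence M := by
  simp only [planarDivergence, sub_apply, Prod.fst_sub, Prod.snd_sub]
  ring

section Divergence

variable {V : ℝ × ℝ → ℝ × ℝ} {V' : ℝ × ℝ → ℝ × ℝ →L[ℝ] ℝ × ℝ}

theorem abs_integral_closedBall_divergence_le (hV : ∀ p, HasFDerivAt V (V' p) p) {r M : ℝ}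
    (hr : 0 ≤ r) (hint : IntegrableOn (fun p => planarDivergence (V' p)) (closedBall 0 r))
    (hM : ∀ p, ‖p‖ = r → ‖V p‖ ≤ M) :
    |∫ p in closedBall 0 r, planarDivergence (V' p)| ≤ 8 * r * M := by
  rw [Prod.closedBall_zero_eq_Icc] at hint ⊢
  have hcont : Continuous V := continuous_iff_continuousAt.2 fun p => (hV p).continuousAt
  rw [show (∫ p in Icc (-r, -r) (r, r), planarDivergence (V' p)) = _ from
    integral_divergence_prod_Icc_of_hasFDerivAt_of_le (fun p => (V p).1) (fun p => (V p).2)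
      (fun p => (ContinuousLinearMap.fst ℝ ℝ ℝ).comp (V' p))
      (fun p => (ContinuousLinearMap.snd ℝ ℝ ℝ).comp (V' p)) (-r, -r) (r, r)
      ⟨by simp; linarith, by simp; linarith⟩
      hcont.fst.continuousOn hcont.snd.continuousOn
      (fun p _ => (hV p).fst) (fun p _ => (hV p).snd) hint]
  have hside : ∀ s t : ℝ, |s| = r → |t| ≤ r →
      |(V (s, t)).1| ≤ M ∧ |(V (s, t)).2| ≤ M ∧ |(V (t, s)).1| ≤ M ∧ |(V (t, s)).2| ≤ M := by
    intro s t hs ht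
    have h1 := hM (s, t) (by simp [Prod.norm_def, hs, ht])
    have h2 := hM (t, s) (by simp [Prod.norm_def, hs, ht])
    exact ⟨(norm_fst_le _).trans h1, (norm_snd_le _).trans h1,
      (norm_fst_le _).trans h2, (norm_snd_le _).trans h2⟩
  have hr' : |r| = r := abs_of_nonneg hr
  have hr'' : |-r| = r := by rw [abs_neg, hr']
  have h1 := abs_intervalIntegral_neg_le hr fun t ht => (hside r t hr' ht).2.2.2
  have h2 := abs_intervalIntegral_neg_le hr fun t ht => (hside (-r) t hr'' ht).2.2.2
  have h3 := abs_intervalIntegral_neg_le hr fun t ht => (hside r t hr' ht).1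
  have h4 := abs_intervalIntegral_neg_le hr fun t ht => (hside (-r) t hr'' ht).1
  simp only at h1 h2 h3 h4 ⊢
  rw [abs_le] at h1 h2 h3 h4 ⊢
  constructor <;> linarith

theorem tendsto_integral_closedBall_divergence (hV : ∀ p, HasFDerivAt V (V' p) p)
    (hdiv : Continuous fun p => planarDivergence (V' p))
    (hdecay : Tendsto (fun p => ‖p‖ * ‖V p‖) (cobounded (ℝ × ℝ)) (𝓝 0)) :
    Tendsto (fun r => ∫ p in closedBall (0 : ℝ × ℝ) r, planarDivergence (V' p)) atTop (𝓝 0) := by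
  rw [Metric.tendsto_nhds]
  intro ε hε
  obtain ⟨R, -, hR⟩ := hasBasis_cobounded_norm.eventually_iff.1
    ((Metric.tendsto_nhds.1 hdecay) (ε / 16) (by positivity))
  filter_upwards [eventually_ge_atTop (max R 1)] with r hr
  have hr1 : 0 < r := lt_of_lt_of_le one_pos (le_of_max_le_right hr)
  have hM : ∀ p : ℝ × ℝ, ‖p‖ = r → ‖V p‖ ≤ ε / 16 / r := fun p hp => by
    have := hR (show R ≤ ‖p‖ from hp ▸ le_of_max_le_left hr)
    rw [Real.dist_eq, sub_zero, abs_of_nonneg (by positivity), hp] at this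
    rw [le_div_iff₀ hr1]
    linarith
  have := abs_integral_closedBall_divergence_le hV hr1.le
    (hdiv.continuousOn.integrableOn_compact (isCompact_closedBall 0 r)) hM
  rw [Real.dist_eq, sub_zero]
  calc _ ≤ 8 * r * (ε / 16 / r) := this
    _ = ε / 2 := by field_simp; ring
    _ < ε := by linarith

end Divergence

theorem eq_zero_of_nonneg_of_tendsto_integral_closedBall {E : Type*} [NormedAddCommGroup E]
    [MeasurableSpace E] [BorelSpace E] [ProperSpace E] (μ : Measure E) [μ.IsOpenPosMeasure]
    [IsFiniteMeasureOnCompacts μ] {h : E → ℝ} (hc : Continuous h) (h0 : 0 ≤ h)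
    (hlim : Tendsto (fun r => ∫ x in closedBall 0 r, h x ∂μ) atTop (𝓝 0)) : h = 0 := by
  by_contra hne
  obtain ⟨x₀, hx₀⟩ := Function.ne_iff.1 hne
  set R := ‖x₀‖ + 1
  have hint : ∀ r, IntegrableOn h (closedBall 0 r) μ := fun r =>
    hc.continuousOn.integrableOn_compact (isCompact_closedBall 0 r)
  have hpos : 0 < ∫ x in closedBall 0 R, h x ∂μ := by
    rw [setIntegral_pos_iff_support_of_nonneg_ae (Eventually.of_forall h0) (hint R)]
    refine lt_of_lt_of_le ?_ (measure_mono (inter_subset_inter_right _ ball_subset_closedBall))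
    exact (hc.isOpen_support.inter isOpen_ball).measure_pos μ
      ⟨x₀, hx₀, mem_ball_zero_iff.2 (lt_add_one _)⟩
  have hmono : ∀ᶠ r in atTop, ∫ x in closedBall 0 R, h x ∂μ ≤ ∫ x in closedBall 0 r, h x ∂μ :=
    (eventually_ge_atTop R).mono fun r hr => setIntegral_mono_set (hint r)
      (Eventually.of_forall h0) (Eventually.of_forall (closedBall_subset_closedBall hr))
  exact hpos.not_ge (ge_of_tendsto hlim hmono)

theorem tendsto_norm_mul_of_polar {g : ℝ × ℝ → ℝ} (hg : ∀ p, 0 ≤ g p)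
    (h : ∀ ε > 0, ∃ R : ℝ, ∀ r ≥ R, ∀ θ : ℝ, r * g (r * cos θ, r * sin θ) < ε) :
    Tendsto (fun p => ‖p‖ * g p) (cobounded (ℝ × ℝ)) (𝓝 0) := by
  rw [Metric.tendsto_nhds]
  intro ε hε
  obtain ⟨R, hR⟩ := h ε hε
  filter_upwards [eventually_cobounded_le_norm R] with p hp
  obtain ⟨θ, hθ⟩ := exists_eq_polar p
  have hρ := Prod.norm_le_sqrt_sq_add_sq p
  have hlt := hR _ (hp.trans hρ) θ
  rw [← hθ] at hlt
  rw [Real.dist_eq, sub_zero, abs_of_nonneg (mul_nonneg (norm_nonneg p) (hg p))]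
  exact (mul_le_mul_of_nonneg_right hρ (hg p)).trans_lt hlt

noncomputable def gradNorm (f : ℝ × ℝ → ℝ) (p : ℝ × ℝ) : ℝ :=
  √((fderiv ℝ f p (1, 0)) ^ 2 + (fderiv ℝ f p (0, 1)) ^ 2)

theorem ContinuousLinearMap.apply_eq_fst_mul_add_snd_mul (L : ℝ × ℝ →L[ℝ] ℝ) (Z : ℝ × ℝ) :
    L Z = Z.1 * L (1, 0) + Z.2 * L (0, 1) := by
  conv_lhs => rw [show Z = Z.1 • ((1 : ℝ), (0 : ℝ)) + Z.2 • ((0 : ℝ), (1 : ℝ)) by ext <;> simp]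
  rw [map_add, map_smul, map_smul, smul_eq_mul, smul_eq_mul]

theorem planarDivergence_smulRight (L : ℝ × ℝ →L[ℝ] ℝ) (Z : ℝ × ℝ) :
    planarDivergence (L.smulRight Z) = L Z := by
  rw [planarDivergence, L.apply_eq_fst_mul_add_snd_mul Z]
  simp only [ContinuousLinearMap.smulRight_apply, Prod.smul_fst, Prod.smul_snd, smul_eq_mul]
  ring

theorem abs_fderiv_apply_le_gradNorm (f : ℝ × ℝ → ℝ) (p : ℝ × ℝ) {Z : ℝ × ℝ}
    (hZ : Z.1 ^ 2 + Z.2 ^ 2 = 1) : |fderiv ℝ f p Z| ≤ gradNorm f p := by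
  rw [ContinuousLinearMap.apply_eq_fst_mul_add_snd_mul, gradNorm]
  apply Real.abs_le_sqrt
  nlinarith [sq_nonneg (Z.1 * fderiv ℝ f p (0, 1) - Z.2 * fderiv ℝ f p (1, 0))]

noncomputable def areaElement (f : ℝ × ℝ → ℝ) (p : ℝ × ℝ) : ℝ :=
  √(1 + ((fderiv ℝ f p (1, 0)) ^ 2 + (fderiv ℝ f p (0, 1)) ^ 2))

theorem areaElement_pos (f : ℝ × ℝ → ℝ) (p : ℝ × ℝ) : 0 < areaElement f p :=
  Real.sqrt_pos.2 (by positivity)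

theorem continuous_areaElement {f : ℝ × ℝ → ℝ} (hf : ContDiff ℝ 1 f) :
    Continuous (areaElement f) := by
  have := hf.continuous_fderiv one_ne_zero
  unfold areaElement
  fun_prop

theorem normalCurv_mul_areaElement (f : ℝ × ℝ → ℝ) (p Z : ℝ × ℝ) :
    normalCurv f p Z * areaElement f p =
      (1 / (1 + (fderiv ℝ f p Z) ^ 2)) * fderiv ℝ (fun q => fderiv ℝ f q Z) p Z := by
  have := areaElement_pos f p
  rw [normalCurv, ← areaElement]
  field_simp

noncomputable def inclinationField (f : ℝ × ℝ → ℝ) (Z p : ℝ × ℝ) : ℝ × ℝ :=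
  arctan (fderiv ℝ f p Z) • Z

section InclinationField

variable {f : ℝ × ℝ → ℝ}

theorem norm_inclinationField_le {Z : ℝ × ℝ} (hZ : Z.1 ^ 2 + Z.2 ^ 2 = 1) (p : ℝ × ℝ) :
    ‖inclinationField f Z p‖ ≤ gradNorm f p :=
  calc ‖inclinationField f Z p‖ = |arctan (fderiv ℝ f p Z)| * ‖Z‖ := by
        rw [inclinationField, norm_smul, Real.norm_eq_abs]
    _ ≤ |fderiv ℝ f p Z| * 1 := mul_le_mul (abs_arctan_le_abs _)
        (Prod.norm_le_one_of_sq_add_sq_eq_one hZ) (norm_nonneg _) (abs_nonneg _)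
    _ ≤ gradNorm f p := by rw [mul_one]; exact abs_fderiv_apply_le_gradNorm f p hZ

theorem hasFDerivAt_inclinationField (hf : ContDiff ℝ 2 f) (Z p : ℝ × ℝ) :
    HasFDerivAt (inclinationField f Z)
      (((1 / (1 + (fderiv ℝ f p Z) ^ 2)) • fderiv ℝ (fun q => fderiv ℝ f q Z) p).smulRight Z)
      p := by
  have hdiff : Differentiable ℝ fun q => fderiv ℝ f q Z :=
    ((ContinuousLinearMap.apply ℝ ℝ Z).contDiff.comp
      (hf.fderiv_right (by norm_num))).differentiable one_ne_zero
  exact ((hasDerivAt_arctan _).comp_hasFDerivAt p (hdiff p).hasFDerivAt).smul_const Z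

theorem planarDivergence_fderiv_inclinationField (hf : ContDiff ℝ 2 f) (Z p : ℝ × ℝ) :
    planarDivergence (fderiv ℝ (inclinationField f Z) p) = normalCurv f p Z * areaElement f p := by
  rw [(hasFDerivAt_inclinationField hf Z p).fderiv, planarDivergence_smulRight,
    normalCurv_mul_areaElement]
  rfl

end InclinationField

theorem normalCurv_sub_eq_zero_of_nonneg {f : ℝ × ℝ → ℝ} (hf : ContDiff ℝ 2 f)
    (hdecay : ∀ ε > 0, ∃ R : ℝ, ∀ r ≥ R, ∀ θ : ℝ, r * gradNorm f (r * cos θ, r * sin θ) < ε)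
    {X Y : ℝ × ℝ} (hX : X.1 ^ 2 + X.2 ^ 2 = 1) (hY : Y.1 ^ 2 + Y.2 ^ 2 = 1)
    (hcont : Continuous fun p => normalCurv f p X - normalCurv f p Y)
    (hnonneg : ∀ p, 0 ≤ normalCurv f p X - normalCurv f p Y) :
    ∀ p, normalCurv f p X - normalCurv f p Y = 0 := by
  set V' : ℝ × ℝ → ℝ × ℝ →L[ℝ] ℝ × ℝ :=
    fun p => fderiv ℝ (inclinationField f X) p - fderiv ℝ (inclinationField f Y) p
  have hV : ∀ p, HasFDerivAt (fun q => inclinationField f X q - inclinationField f Y q) (V' p) p :=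
    fun p => ((hasFDerivAt_inclinationField hf X p).differentiableAt.hasFDerivAt).sub
      (hasFDerivAt_inclinationField hf Y p).differentiableAt.hasFDerivAt
  have hdiv : (fun p => planarDivergence (V' p)) =
      fun p => (normalCurv f p X - normalCurv f p Y) * areaElement f p := by
    funext p
    rw [planarDivergence_sub, planarDivergence_fderiv_inclinationField hf,
      planarDivergence_fderiv_inclinationField hf, sub_mul]
  have hdiv_cont : Continuous fun p => planarDivergence (V' p) :=
    hdiv ▸ hcont.mul (continuous_areaElement (hf.of_le (by norm_num)))
  have hV_decay : Tendsto (fun p => ‖p‖ * ‖inclinationField f X p - inclinationField f Y p‖)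
      (cobounded (ℝ × ℝ)) (𝓝 0) := by
    have hgrad := (tendsto_norm_mul_of_polar (g := gradNorm f)
      (fun p => Real.sqrt_nonneg _) hdecay).const_mul 2
    rw [mul_zero] at hgrad
    refine squeeze_zero (fun p => by positivity) (fun p => ?_) hgrad
    calc ‖p‖ * ‖inclinationField f X p - inclinationField f Y p‖
        ≤ ‖p‖ * (gradNorm f p + gradNorm f p) := by
          gcongr
          exact (norm_sub_le _ _).trans
            (add_le_add (norm_inclinationField_le hX p) (norm_inclinationField_le hY p))
      _ = 2 * (‖p‖ * gradNorm f p) := by ring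
  have hzero := eq_zero_of_nonneg_of_tendsto_integral_closedBall volume (hdiv ▸ hdiv_cont)
    (fun p => mul_nonneg (hnonneg p) (areaElement_pos f p).le)
    (hdiv ▸ tendsto_integral_closedBall_divergence hV hdiv_cont hV_decay)
  exact fun p => (mul_eq_zero.1 (congrFun hzero p)).resolve_right (areaElement_pos f p).ne'

/-- If the gradient of the `C²` function `f` decays uniformly faster
than `1/r`, and the function `p ↦ k(p,X) − k(p,Y)` is continuous and not identically
zero, then it attains both positive and negative values. -/
theorem curvature_difference_changes_sign
    (f : ℝ × ℝ → ℝ) (hf : ContDiff ℝ 2 f)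
    (hdecay : ∀ ε > 0, ∃ R : ℝ, ∀ r ≥ R, ∀ θ : ℝ,
      r * Real.sqrt ((fderiv ℝ f (r * Real.cos θ, r * Real.sin θ) (1, 0)) ^ 2 +
        (fderiv ℝ f (r * Real.cos θ, r * Real.sin θ) (0, 1)) ^ 2) < ε)
    (X Y : ℝ × ℝ) (hX : X.1 ^ 2 + X.2 ^ 2 = 1) (hY : Y.1 ^ 2 + Y.2 ^ 2 = 1)
    (hcont : Continuous fun p => normalCurv f p X - normalCurv f p Y)
    (hne : ¬ ∀ p : ℝ × ℝ, normalCurv f p X - normalCurv f p Y = 0) :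
    (∃ p : ℝ × ℝ, 0 < normalCurv f p X - normalCurv f p Y) ∧
    (∃ q : ℝ × ℝ, normalCurv f q X - normalCurv f q Y < 0) := by
  constructor
  · by_contra hpos
    simp only [not_exists, not_lt] at hpos
    have hcont' : Continuous fun p => normalCurv f p Y - normalCurv f p X := by
      have : Continuous fun p => -(normalCurv f p X - normalCurv f p Y) := hcont.neg
      simpa only [neg_sub] using this
    have hzero := normalCurv_sub_eq_zero_of_nonneg hf hdecay hY hX hcont'
      fun p => sub_nonneg.2 (sub_nonpos.1 (hpos p))
    exact hne fun p => by linarith [hzero p]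
  · by_contra hneg
    simp only [not_exists, not_lt] at hneg
    exact hne (normalCurv_sub_eq_zero_of_nonneg hf hdecay hX hY hcont hneg)
end

section
/- Let λ > 0 and f(x,y) = 1 + λ(√(1+x²) + x + √(1+y²) + y). Then the graph of f has everywhere positive Gauss curvature and no umbilical points. Specifically, f₁₁ f₂₂ − f₁₂² > 0 everywhere, while (1+f₁²)f₁₂ − f₁f₂f₁₁ = −f₁f₂f₁₁ ≠ 0 everywhere. -/
/-! The function is `g(x) + g(y)` up to a constant, so its Hessian is diagonal: `f₁₂ = 0`,
`f₁₁ = λ(1+x²)^{-3/2} > 0` and `f₂₂ = λ(1+y²)^{-3/2} > 0`, which gives positive curvature.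
The slopes `f₁ = λ(x/√(1+x²) + 1)` and `f₂` are positive since `x/√(1+x²) = tanh (arsinh x)`
exceeds `-1`, so `f₁f₂f₁₁ ≠ 0`. -/

open Real ContinuousLinearMap

lemma hasDerivAt_sqrt_one_add_sq (t : ℝ) :
    HasDerivAt (fun s => √(1 + s ^ 2)) (t / √(1 + t ^ 2)) t := by
  have h := ((hasDerivAt_pow 2 t).const_add 1).sqrt (by positivity)
  convert h using 1
  field_simp
  ring

lemma hasDerivAt_div_sqrt_one_add_sq (t : ℝ) :
    HasDerivAt (fun s => s / √(1 + s ^ 2)) (1 / √(1 + t ^ 2) ^ 3) t := by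
  have hpos : 0 < √(1 + t ^ 2) := by positivity
  have hsq : √(1 + t ^ 2) ^ 2 = 1 + t ^ 2 := sq_sqrt (by positivity)
  refine ((hasDerivAt_id' t).div (hasDerivAt_sqrt_one_add_sq t) hpos.ne').congr_deriv ?_
  field_simp
  linear_combination hsq

lemma neg_one_lt_div_sqrt_one_add_sq (t : ℝ) : -1 < t / √(1 + t ^ 2) := by
  rw [← tanh_arsinh]
  exact (tanh_bijOn.mapsTo (Set.mem_univ _)).1

section Separable

variable {a b a' b' : ℝ → ℝ}

lemma fderiv_comp_fst_apply (ha : ∀ t, HasDerivAt a (a' t) t) (q v : ℝ × ℝ) :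
    fderiv ℝ (fun w : ℝ × ℝ => a w.1) q v = a' q.1 * v.1 := by
  have h : HasFDerivAt (fun w : ℝ × ℝ => a w.1) (a' q.1 • fst ℝ ℝ ℝ) q :=
    (ha q.1).comp_hasFDerivAt q hasFDerivAt_fst
  rw [h.fderiv]
  simp

lemma fderiv_comp_snd_apply (hb : ∀ t, HasDerivAt b (b' t) t) (q v : ℝ × ℝ) :
    fderiv ℝ (fun w : ℝ × ℝ => b w.2) q v = b' q.2 * v.2 := by
  have h : HasFDerivAt (fun w : ℝ × ℝ => b w.2) (b' q.2 • snd ℝ ℝ ℝ) q :=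
    (hb q.2).comp_hasFDerivAt q hasFDerivAt_snd
  rw [h.fderiv]
  simp

lemma fderiv_add_comp_fst_snd_apply (ha : ∀ t, HasDerivAt a (a' t) t)
    (hb : ∀ t, HasDerivAt b (b' t) t) (q v : ℝ × ℝ) :
    fderiv ℝ (fun w : ℝ × ℝ => a w.1 + b w.2) q v = a' q.1 * v.1 + b' q.2 * v.2 := by
  have h : HasFDerivAt (fun w : ℝ × ℝ => a w.1 + b w.2)
      (a' q.1 • fst ℝ ℝ ℝ + b' q.2 • snd ℝ ℝ ℝ) q :=
    ((ha q.1).comp_hasFDerivAt q hasFDerivAt_fst).add ((hb q.2).comp_hasFDerivAt q hasFDerivAt_snd)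
  rw [h.fderiv]
  simp

end Separable

/-- For `λ > 0` and `f(x,y) = 1 + λ(√(1+x²) + x + √(1+y²) + y)`,
the graph of `f` has everywhere positive Gauss curvature (`f₁₁f₂₂ − f₁₂² > 0`) and no
umbilical points: `(1+f₁²)f₁₂ − f₁f₂f₁₁ = −f₁f₂f₁₁ ≠ 0` everywhere. -/
theorem positively_curved_graph_umbilic_free (l : ℝ) (hl : 0 < l) :
    ∀ p : ℝ × ℝ,
      (fun f : ℝ × ℝ → ℝ =>
        0 < fderiv ℝ (fun q => fderiv ℝ f q (1, 0)) p (1, 0) *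
              fderiv ℝ (fun q => fderiv ℝ f q (0, 1)) p (0, 1)
            - (fderiv ℝ (fun q => fderiv ℝ f q (0, 1)) p (1, 0)) ^ 2 ∧
        (1 + (fderiv ℝ f p (1, 0)) ^ 2) * fderiv ℝ (fun q => fderiv ℝ f q (0, 1)) p (1, 0)
            - fderiv ℝ f p (1, 0) * fderiv ℝ f p (0, 1) *
                fderiv ℝ (fun q => fderiv ℝ f q (1, 0)) p (1, 0)
          = -(fderiv ℝ f p (1, 0) * fderiv ℝ f p (0, 1) *
                fderiv ℝ (fun q => fderiv ℝ f q (1, 0)) p (1, 0)) ∧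
        fderiv ℝ f p (1, 0) * fderiv ℝ f p (0, 1) *
            fderiv ℝ (fun q => fderiv ℝ f q (1, 0)) p (1, 0) ≠ 0)
        (fun w : ℝ × ℝ =>
          1 + l * (Real.sqrt (1 + w.1 ^ 2) + w.1 + Real.sqrt (1 + w.2 ^ 2) + w.2)) := by
  intro p
  set d₁ : ℝ → ℝ := fun t => l * (t / √(1 + t ^ 2) + 1)
  set d₂ : ℝ → ℝ := fun t => l * (1 / √(1 + t ^ 2) ^ 3)
  have hg (t : ℝ) : HasDerivAt (fun s => l * (√(1 + s ^ 2) + s)) (d₁ t) t :=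
    ((hasDerivAt_sqrt_one_add_sq t).add (hasDerivAt_id' t)).const_mul l
  have hd₁ (t : ℝ) : HasDerivAt d₁ (d₂ t) t :=
    ((hasDerivAt_div_sqrt_one_add_sq t).add_const 1).const_mul l
  have hf : (fun w : ℝ × ℝ => 1 + l * (√(1 + w.1 ^ 2) + w.1 + √(1 + w.2 ^ 2) + w.2)) =
      fun w => (1 + l * (√(1 + w.1 ^ 2) + w.1)) + l * (√(1 + w.2 ^ 2) + w.2) := by
    funext w; ring
  have hd₁_pos (t : ℝ) : 0 < d₁ t :=
    mul_pos hl (by linarith [neg_one_lt_div_sqrt_one_add_sq t])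
  have hd₂_pos (t : ℝ) : 0 < d₂ t := by positivity
  rw [hf]
  simp only [fderiv_add_comp_fst_snd_apply (fun t => (hg t).const_add 1) hg,
    fderiv_comp_fst_apply hd₁, fderiv_comp_snd_apply hd₁, mul_one, mul_zero, add_zero, zero_add]
  refine ⟨by simpa using mul_pos (hd₂_pos p.1) (hd₂_pos p.2), by ring,
    (mul_pos (mul_pos (hd₁_pos p.1) (hd₁_pos p.2)) (hd₂_pos p.1)).ne'⟩
end
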